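/- arXiv:2106.08203 — 2 statements merged into one kernel-verified Lean document; each statement's English description precedes it below -/
import Mathlib

section
/- Every asymptotically periodic positive numerical function φ : ℕ → ℕ (with φ(t) ≥ 1 for all t) can be obtained from finitely many functions of Types A, B, and C using the operations φ ↦ φ − 1 (applied only when φ(t) ≥ 2 for all t) and (φ, ψ) ↦ φ + ψ − 1. -/
/-- A numerical function is asymptotically periodic if it is periodic for all
sufficiently large arguments. -/
def AsymptoticallyPeriodic (φ : ℕ → ℕ) : Prop :=
  ∃ N m, 0 < m ∧ ∀ t, N ≤ t → φ (t + m) = φ t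

/-- Type A functions: `1,…,1,2,2,2,…`. -/
def TypeA (φ : ℕ → ℕ) : Prop := ∃ N, ∀ t, φ t = if t < N then 1 else 2

/-- Type B functions: value `2` at exactly one position, `1` elsewhere. -/
def TypeB (φ : ℕ → ℕ) : Prop := ∃ N, ∀ t, φ t = if t = N then 2 else 1

/-- Type C functions: the constant function `1`, or a periodic function whose
period is of the form `1,…,1,2,1,…,1` (value `2` at exactly one position of each
period). -/
def TypeC (φ : ℕ → ℕ) : Prop :=
  (∀ t, φ t = 1) ∨
    ∃ m d, 0 < m ∧ d < m ∧ ∀ t, φ t = if t % m = d then 2 else 1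

/-- The class of functions generated from Types A, B, C by the operations
`φ ↦ φ − 1` (when `φ ≥ 2` everywhere) and `(φ, ψ) ↦ φ + ψ − 1`. -/
inductive Generated : (ℕ → ℕ) → Prop
  | base {φ : ℕ → ℕ} : TypeA φ ∨ TypeB φ ∨ TypeC φ → Generated φ
  | sub {φ : ℕ → ℕ} : Generated φ → (∀ t, 2 ≤ φ t) → Generated (fun t => φ t - 1)
  | add {φ ψ : ℕ → ℕ} : Generated φ → Generated ψ →
      Generated (fun t => φ t + ψ t - 1)

/-! Subtracting 1 turns `(φ, ψ) ↦ φ + ψ − 1` into addition, so the generated functions, shifted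
down by one, form an additive submonoid of `ℕ → ℕ`. It contains the indicators of points, of
final segments and of residue classes (Types B, A, C), and it allows cancelling an added constant.
An eventually periodic `f` then satisfies `f + V = g + h + V • 𝟙[N, ∞)` with `g` periodic (a sum of
residue-class indicators), `h` finitely supported (a sum of point indicators), and `V` a bound for
`g` below the threshold `N`. -/

def shiftedGenerated : AddSubmonoid (ℕ → ℕ) where
  carrier := {f | Generated (f + 1)}
  zero_mem' := Generated.base (Or.inr (Or.inr (Or.inl fun _ => rfl)))
  add_mem' {f g} hf hg := by
    show Generated (f + g + 1)
    convert Generated.add hf hg using 1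
    ext t
    simp only [Pi.add_apply, Pi.one_apply]
    omega

namespace shiftedGenerated

theorem mem_iff {f : ℕ → ℕ} : f ∈ shiftedGenerated ↔ Generated (f + 1) := Iff.rfl

theorem single_one_mem (N : ℕ) : (Pi.single N 1 : ℕ → ℕ) ∈ shiftedGenerated := by
  refine mem_iff.2 (Generated.base (Or.inr (Or.inl ⟨N, fun t => ?_⟩)))
  by_cases ht : t = N <;> simp [ht]

theorem indicator_Ici_mem (N : ℕ) : (Set.Ici N).indicator 1 ∈ shiftedGenerated := by
  refine mem_iff.2 (Generated.base (Or.inl ⟨N, fun t => ?_⟩))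
  by_cases ht : t < N
  · simp [ht]
  · simp [not_lt.1 ht, ht]

theorem indicator_mod_eq_mem {m d : ℕ} (hm : 0 < m) (hd : d < m) :
    {t | t % m = d}.indicator 1 ∈ shiftedGenerated := by
  refine mem_iff.2 (Generated.base (Or.inr (Or.inr (Or.inr ⟨m, d, hm, hd, fun t => ?_⟩))))
  by_cases ht : t % m = d <;> simp [ht]

theorem of_add_const_mem {f : ℕ → ℕ} (k : ℕ) (hf : f + (fun _ => k) ∈ shiftedGenerated) :
    f ∈ shiftedGenerated := by
  induction k with
  | zero =>
    convert hf using 1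
    ext t
    simp
  | succ k ih =>
    refine ih (mem_iff.2 ?_)
    convert Generated.sub hf (fun t => by simp only [Pi.add_apply, Pi.one_apply]; omega) using 1
    ext t
    simp only [Pi.add_apply, Pi.one_apply]
    omega

theorem of_periodic {g : ℕ → ℕ} {m : ℕ} (hg : Function.Periodic g m) (hm : 0 < m) :
    g ∈ shiftedGenerated := by
  have hsum : g = ∑ r ∈ Finset.range m, g r • {t | t % m = r}.indicator 1 := by
    ext t
    simp [Finset.sum_apply, Set.indicator_apply, Nat.mod_lt t hm, hg.map_mod_nat]
  rw [hsum]
  exact sum_mem fun r hr =>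
    nsmul_mem (indicator_mod_eq_mem hm (Finset.mem_range.1 hr)) (g r)

theorem of_eventually_zero {h : ℕ → ℕ} {N : ℕ} (hN : ∀ t, N ≤ t → h t = 0) :
    h ∈ shiftedGenerated := by
  have hsum : h = ∑ s ∈ Finset.range N, h s • (Pi.single s 1 : ℕ → ℕ) := by
    ext t
    by_cases ht : t < N
    · simp [Finset.sum_apply, Pi.single_apply, ht]
    · simp [Finset.sum_apply, Pi.single_apply, ht, hN t (not_lt.1 ht)]
  rw [hsum]
  exact sum_mem fun s _ => nsmul_mem (single_one_mem s) (h s)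

theorem of_eventually_periodic {f g : ℕ → ℕ} {m N : ℕ} (hg : Function.Periodic g m) (hm : 0 < m)
    (hfg : ∀ t, N ≤ t → f t = g t) : f ∈ shiftedGenerated := by
  set V := ∑ s ∈ Finset.range N, g s
  have hgV : ∀ t < N, g t ≤ V := fun t ht =>
    Finset.single_le_sum (fun _ _ => Nat.zero_le _) (Finset.mem_range.2 ht)
  set h : ℕ → ℕ := fun t => if t < N then f t + V - g t else 0
  have hdecomp : f + (fun _ => V) = g + h + V • (Set.Ici N).indicator 1 := by
    ext t
    by_cases ht : t < N
    · simp only [Pi.add_apply, Pi.smul_apply, h, ht, ↓reduceIte,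
        Set.indicator_of_notMem (Set.notMem_Ici.2 ht), smul_zero, add_zero]
      have := hgV t ht
      omega
    · simp [h, ht, hfg t (not_lt.1 ht), not_lt.1 ht]
  refine of_add_const_mem V ?_
  rw [hdecomp]
  have hh : h ∈ shiftedGenerated :=
    of_eventually_zero fun t (ht : N ≤ t) => by simp [h, not_lt.2 ht]
  exact add_mem (add_mem (of_periodic hg hm) hh) (nsmul_mem (indicator_Ici_mem N) V)

end shiftedGenerated

theorem AsymptoticallyPeriodic.exists_periodic {φ : ℕ → ℕ} (hφ : AsymptoticallyPeriodic φ) :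
    ∃ g m N, Function.Periodic g m ∧ 0 < m ∧ ∀ t, N ≤ t → φ t = g t := by
  obtain ⟨N, m, hm, hper⟩ := hφ
  have hshift : ∀ k t, N ≤ t → φ (t + m * k) = φ t := by
    intro k
    induction k with
    | zero => simp
    | succ k ih =>
      intro t ht
      rw [Nat.mul_succ, ← add_assoc, hper _ (by omega), ih t ht]
  refine ⟨fun t => φ (t % m + m * N), m, N, fun t => by simp, hm, fun t ht => ?_⟩
  -- both `t` and `t % m + m * N` lie in `[N, ∞)`, and shift to the common value `t + m * N`
  have hcommon : t % m + m * N + m * (t / m) = t + m * N := by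
    linarith [Nat.mod_add_div t m]
  have hle : N ≤ t % m + m * N := le_add_left (Nat.le_mul_of_pos_left N hm)
  rw [← hshift N t ht, ← hcommon, hshift _ _ hle]

/-- Every asymptotically periodic positive numerical function is obtained from
finitely many functions of Types A, B, C by the two operations. -/
theorem stmt_1 (φ : ℕ → ℕ) (hpos : ∀ t, 1 ≤ φ t)
    (hper : AsymptoticallyPeriodic φ) : Generated φ := by
  obtain ⟨g, m, N, hg, hm, hφg⟩ := hper.exists_periodic
  have hmem : (fun t => φ t - 1) ∈ shiftedGenerated :=
    shiftedGenerated.of_eventually_periodic (hg.comp (· - 1)) hm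
      fun t (ht : N ≤ t) => by simp [hφg t ht]
  convert shiftedGenerated.mem_iff.1 hmem using 1
  ext t
  simp only [Pi.add_apply, Pi.one_apply]
  have := hpos t
  omega
end

section
/- Let A = k[x₁,...,xₘ] and B = k[y₁,...,yₙ] be polynomial rings over a field k with disjoint sets of variables, regarded inside R = k[x₁,...,xₘ,y₁,...,yₙ]. If I ⊆ A and J ⊆ B are nonzero proper homogeneous ideals, then the extensions of I and J to R satisfy IR ∩ JR = (IR)(JR). -/
open MvPolynomial

/-- The maximal homogeneous ideal of a polynomial ring. -/
noncomputable def maxIdeal (k : Type*) [Field k] (σ : Type*) :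
    Ideal (MvPolynomial σ k) :=
  Ideal.span (Set.range (MvPolynomial.X : σ → MvPolynomial σ k))

/-- The depth of an `S`-module `M` with respect to an ideal `m`: the supremum of
lengths of `M`-regular sequences with entries in `m`. -/
noncomputable def idealDepth {S : Type*} [CommRing S] (m : Ideal S)
    (M : Type*) [AddCommGroup M] [Module S M] : ℕ :=
  sSup {r : ℕ | ∃ rs : List S, rs.length = r ∧ (∀ x ∈ rs, x ∈ m) ∧
    RingTheory.Sequence.IsRegular M rs}

/-- `depth S/Q` for a polynomial ring `S` and ideal `Q`, w.r.t. the maximal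
homogeneous ideal. -/
noncomputable def pdepth {k : Type*} [Field k] {σ : Type*}
    (Q : Ideal (MvPolynomial σ k)) : ℕ :=
  idealDepth (maxIdeal k σ) (MvPolynomial σ k ⧸ Q)

/-- A monomial ideal. -/
def IsMonomialIdeal {k : Type*} [CommSemiring k] {σ : Type*}
    (I : Ideal (MvPolynomial σ k)) : Prop :=
  ∃ s : Set (σ →₀ ℕ), I = Ideal.span ((fun d => MvPolynomial.monomial d (1 : k)) '' s)

/-- A homogeneous ideal: one generated by homogeneous polynomials. -/
def IsHomogeneousIdeal {k : Type*} [CommSemiring k] {σ : Type*}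
    (I : Ideal (MvPolynomial σ k)) : Prop :=
  ∃ s : Set (MvPolynomial σ k), (∀ p ∈ s, ∃ d, MvPolynomial.IsHomogeneous p d) ∧
    I = Ideal.span s

/-- The `t`-th symbolic power of an ideal `Q`: the intersection of the
contractions of `Qᵗ` localized at the minimal primes of `Q`. -/
noncomputable def symbolicPower {S : Type*} [CommRing S] (Q : Ideal S) (t : ℕ) :
    Ideal S :=
  ⨅ p : {p : Ideal S // p ∈ Q.minimalPrimes},
    haveI : p.1.IsPrime := p.2.1.1
    ((Q ^ t).map (algebraMap S (Localization.AtPrime p.1))).comap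
      (algebraMap S (Localization.AtPrime p.1))

/-!
Identify `k[x, y]` with `B[x]` for `B = k[y]`, so that `IR` is extended from `k[x]` along the
coefficient map and `JR` is the ideal of polynomials with all coefficients in `J`. Since `k` is
a field, `J` has a `k`-linear retraction `π : B → J`. Applying `π` to every coefficient gives
an additive map `Φ` onto `JR` that fixes `JR` and commutes with multiplication by polynomials over
`k`. An element `f = ∑ gᵢ aᵢ` of `IR ∩ JR`, with `aᵢ ∈ I`, is then `Φ f = ∑ Φ(gᵢ) aᵢ ∈ (IR)(JR)`.
-/

theorem Ideal.map_inf_le_mul_of_retraction {R S : Type*} [CommRing R] [CommRing S]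
    (φ : R →+* S) (I : Ideal R) (P : Ideal S) (Φ : S →+ S) (hΦ_mem : ∀ s, Φ s ∈ P)
    (hΦ_fix : ∀ s ∈ P, Φ s = s) (hΦ_mul : ∀ s r, Φ (s * φ r) = Φ s * φ r) :
    I.map φ ⊓ P ≤ I.map φ * P := by
  rintro f ⟨hfI, hfP⟩
  suffices h : ∀ s, Φ (s * f) ∈ I.map φ * P by simpa [hΦ_fix f hfP] using h 1
  clear hfP
  induction hfI using Submodule.span_induction with
  | mem _ hx =>
    obtain ⟨r, hr, rfl⟩ := hx
    intro s
    rw [hΦ_mul, mul_comm (Φ s)]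
    exact Ideal.mul_mem_mul (Ideal.mem_map_of_mem φ hr) (hΦ_mem s)
  | zero => simp
  | add x y _ _ hx hy => intro s; rw [mul_add, map_add]; exact add_mem (hx s) (hy s)
  | smul t x _ hx => intro s; rw [smul_eq_mul, ← mul_assoc]; exact hx (s * t)

namespace MvPolynomial

variable {k B B' : Type*} [CommSemiring k] [CommSemiring B] [CommSemiring B']
  [Algebra k B] [Algebra k B'] {σ : Type*}

noncomputable def mapCoeffs (π : B →ₗ[k] B') : MvPolynomial σ B →ₗ[k] MvPolynomial σ B' :=
  (AddMonoidAlgebra.coeffLinearEquiv k).symm.toLinearMap ∘ₗ Finsupp.mapRange.linearMap π ∘ₗ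
    (AddMonoidAlgebra.coeffLinearEquiv k).toLinearMap

@[simp]
theorem coeff_mapCoeffs (π : B →ₗ[k] B') (f : MvPolynomial σ B) (d : σ →₀ ℕ) :
    coeff d (mapCoeffs π f) = π (coeff d f) :=
  rfl

theorem mapCoeffs_mul_map_algebraMap (π : B →ₗ[k] B') (f : MvPolynomial σ B)
    (g : MvPolynomial σ k) :
    mapCoeffs π (f * map (algebraMap k B) g) = mapCoeffs π f * map (algebraMap k B') g := by
  classical
  ext d
  simp only [coeff_mapCoeffs, coeff_mul, coeff_map, map_sum, ← Algebra.commutes,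
    ← Algebra.smul_def, map_smul]

theorem map_map_inf_map_C_eq_mul {k B : Type*} [Field k] [CommRing B] [Algebra k B] {σ : Type*}
    (I : Ideal (MvPolynomial σ k)) (J : Ideal B) :
    I.map (map (algebraMap k B)) ⊓ J.map (C : B →+* MvPolynomial σ B) =
      I.map (map (algebraMap k B)) * J.map C := by
  obtain ⟨ρ, hρ⟩ := (J.restrictScalars k).subtype.exists_leftInverse_of_injective
    (Submodule.ker_subtype _)
  let π : B →ₗ[k] B := (J.restrictScalars k).subtype ∘ₗ ρ
  have hπ_fix : ∀ b ∈ J, π b = b := fun b hb =>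
    congrArg Subtype.val (LinearMap.congr_fun hρ ⟨b, hb⟩)
  refine le_antisymm (Ideal.map_inf_le_mul_of_retraction _ I _ (mapCoeffs (σ := σ) π)
    (fun f => mem_map_C_iff.2 fun d => (ρ (coeff d f)).2)
    (fun f hf => MvPolynomial.ext _ _ fun d => hπ_fix _ (mem_map_C_iff.1 hf d))
    (mapCoeffs_mul_map_algebraMap π)) Ideal.mul_le_inf

end MvPolynomial

theorem stmt_2_general (k : Type*) [Field k] (m n : ℕ)
    (I : Ideal (MvPolynomial (Fin m) k)) (J : Ideal (MvPolynomial (Fin n) k)) :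
    Ideal.map (MvPolynomial.rename (Sum.inl : Fin m → Fin m ⊕ Fin n)) I ⊓
        Ideal.map (MvPolynomial.rename (Sum.inr : Fin n → Fin m ⊕ Fin n)) J =
      Ideal.map (MvPolynomial.rename (Sum.inl : Fin m → Fin m ⊕ Fin n)) I *
        Ideal.map (MvPolynomial.rename (Sum.inr : Fin n → Fin m ⊕ Fin n)) J := by
  let e := (sumAlgEquiv k (Fin m) (Fin n)).toRingEquiv
  have hI : I.map (rename Sum.inl) =
      (I.map (map (algebraMap k (MvPolynomial (Fin n) k)))).map e.symm := by
    rw [← Ideal.map_coe e.symm, ← Ideal.map_coe (rename _), Ideal.map_map]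
    congr 1
    ext <;> simp [e]
  have hJ : J.map (rename Sum.inr) = (J.map (C : _ →+* MvPolynomial (Fin m) _)).map e.symm := by
    rw [← Ideal.map_coe e.symm, ← Ideal.map_coe (rename _), Ideal.map_map]
    congr 1
    ext <;> simp [e]
  rw [hI, hJ, ← Ideal.map_mul, ← map_map_inf_map_C_eq_mul, Ideal.map_symm, Ideal.map_symm,
    Ideal.map_symm, Ideal.comap_inf]

/-- If `I ⊆ A = k[x₁,…,xₘ]` and `J ⊆ B = k[y₁,…,yₙ]` are nonzero proper
homogeneous ideals in polynomial rings with disjoint variables, then in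
`R = A ⊗_k B` one has `IR ∩ JR = (IR)(JR)`. -/
theorem stmt_2 (k : Type*) [Field k] (m n : ℕ)
    (I : Ideal (MvPolynomial (Fin m) k)) (J : Ideal (MvPolynomial (Fin n) k))
    (hIhom : IsHomogeneousIdeal I) (hJhom : IsHomogeneousIdeal J)
    (hI0 : I ≠ ⊥) (hI1 : I ≠ ⊤) (hJ0 : J ≠ ⊥) (hJ1 : J ≠ ⊤) :
    Ideal.map (MvPolynomial.rename (Sum.inl : Fin m → Fin m ⊕ Fin n)) I ⊓
        Ideal.map (MvPolynomial.rename (Sum.inr : Fin n → Fin m ⊕ Fin n)) J =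
      Ideal.map (MvPolynomial.rename (Sum.inl : Fin m → Fin m ⊕ Fin n)) I *
        Ideal.map (MvPolynomial.rename (Sum.inr : Fin n → Fin m ⊕ Fin n)) J :=
  stmt_2_general k m n I J
end
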